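/- Let β(I) = I³·sinh(π(I−1)/2)/((I−1)³·sinh(πI/2)) (extended by β(0) = 0) and let μ ≠ 0 satisfy e^{−π/2} < 1/|μ| < e^{π/2}. Then the equation β(I) = 1/|μ| has exactly three solutions I_− ∈ (−∞,0), I_0 ∈ (0,1), I_+ ∈ (1,+∞); moreover β(I) < 1/|μ| for I ∈ (I_−, I_0) ∪ (I_+, +∞) and β(I) > 1/|μ| for I ∈ (−∞, I_−) ∪ (I_0, 1) ∪ (1, I_+). -/

import Mathlib

/-!
Put `g(x) = sinh(πx/2) / x³`: it is even, and `g(x) > (π/2)/x² > 0` because `|sinh y| > |y|`.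
Since `β(I) = g(I - 1) / g(I)`, one gets `β(1 - I) = β(I)⁻¹`, `β → 0` at `0`, `β → ∞` at `1`,
and `β → e^{∓π/2}` at `±∞`. The derivative is `β' = I² N / ((I - 1)⁴ sinh²(πI/2))` with
`N = (π/2) sinh(π/2) I(I - 1) - 3 sinh(π(I - 1)/2) sinh(πI/2)`. As `sinh a sinh b - ab` has the
sign of `ab` and `sinh(π/2) < 3π/2`, `N` has the sign opposite to `I(I - 1)`: `β` is strictly
decreasing on `(-∞, 0)` and `(1, ∞)` and strictly increasing on `(0, 1)`. The intermediate value
theorem on each branch then gives exactly one solution of `β = 1/|μ|` there.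
-/

open Real

/-- `β(I) = I³ sinh(π(I-1)/2) / ((I-1)³ sinh(πI/2))` (with `β(0) = 0` by Lean's
division convention, matching the continuous extension). -/
noncomputable def betaFn (I : ℝ) : ℝ :=
  I ^ 3 * Real.sinh (π * (I - 1) / 2) / ((I - 1) ^ 3 * Real.sinh (π * I / 2))

open Filter Set Topology

namespace Real

lemma sinh_pi_div_two_lt : sinh (π / 2) < 3 * π / 2 := by
  have hexp : exp (π / 2) < 9 := calc
    exp (π / 2) < exp 2 := exp_lt_exp.2 (by linarith [pi_lt_d2])
    _ = exp 1 * exp 1 := by rw [← exp_add]; norm_num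
    _ < 3 * 3 := by nlinarith [exp_pos 1, exp_one_lt_d9]
    _ = 9 := by norm_num
  rw [sinh_eq]
  linarith [exp_pos (-(π / 2)), pi_gt_three]

lemma mul_lt_sinh_mul_sinh {a b : ℝ} (h : 0 < a * b) : a * b < sinh a * sinh b := by
  rcases (mul_pos_iff.1 h) with ⟨ha, hb⟩ | ⟨ha, hb⟩
  · exact mul_lt_mul'' (self_lt_sinh_iff.2 ha) (self_lt_sinh_iff.2 hb) ha.le hb.le
  · rw [← neg_mul_neg, ← neg_mul_neg (sinh a), ← sinh_neg, ← sinh_neg]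
    exact mul_lt_mul'' (self_lt_sinh_iff.2 (neg_pos.2 ha)) (self_lt_sinh_iff.2 (neg_pos.2 hb))
      (neg_pos.2 ha).le (neg_pos.2 hb).le

lemma sinh_mul_sinh_lt_mul {a b : ℝ} (h : a * b < 0) : sinh a * sinh b < a * b := by
  have := mul_lt_sinh_mul_sinh (a := -a) (b := b) (by linarith)
  rw [sinh_neg] at this
  linarith

lemma sinh_sub_div_sinh (a x : ℝ) :
    sinh (x - a) / sinh x = (exp (-a) - exp a * exp (-(2 * x))) / (1 - exp (-(2 * x))) := by
  have hx : exp x ≠ 0 := exp_ne_zero x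
  rw [sinh_eq, sinh_eq, div_div_div_cancel_right₀ two_ne_zero,
    ← mul_div_mul_left (exp (-a) - exp a * exp (-(2 * x))) _ hx]
  congr 1 <;> simp only [mul_sub, mul_one, ← exp_add] <;> ring_nf

lemma tendsto_sinh_sub_div_sinh_atTop (a : ℝ) :
    Tendsto (fun x => sinh (x - a) / sinh x) atTop (𝓝 (exp (-a))) := by
  have hq : Tendsto (fun x : ℝ => exp (-(2 * x))) atTop (𝓝 0) :=
    tendsto_exp_atBot.comp (tendsto_neg_atTop_atBot.comp (tendsto_id.const_mul_atTop two_pos))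
  rw [funext (sinh_sub_div_sinh a)]
  have h := ((tendsto_const_nhds (x := exp (-a))).sub (hq.const_mul (exp a))).div
    ((tendsto_const_nhds (x := (1 : ℝ))).sub hq) (by norm_num)
  rwa [mul_zero, sub_zero, sub_zero, div_one] at h

end Real

lemma tendsto_div_sub_one_atTop : Tendsto (fun x : ℝ => x / (x - 1)) atTop (𝓝 1) := by
  have h := ((tendsto_const_nhds (x := (1 : ℝ))).sub tendsto_inv_atTop_zero).inv₀ (by norm_num)
  refine (by simpa using h : Tendsto (fun x : ℝ => (1 - x⁻¹)⁻¹) atTop (𝓝 1)).congr' ?_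
  filter_upwards [eventually_ne_atTop 0] with x hx
  field_simp

noncomputable def betaDerivNumerator (I : ℝ) : ℝ :=
  π / 2 * sinh (π / 2) * (I * (I - 1)) - 3 * sinh (π * (I - 1) / 2) * sinh (π * I / 2)

lemma betaDerivNumerator_neg {I : ℝ} (h : 0 < I * (I - 1)) : betaDerivNumerator I < 0 := by
  have hab : π * (I - 1) / 2 * (π * I / 2) = π ^ 2 / 4 * (I * (I - 1)) := by ring
  have hprod := mul_lt_sinh_mul_sinh (a := π * (I - 1) / 2) (b := π * I / 2)
    (by rw [hab]; positivity)
  rw [hab] at hprod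
  unfold betaDerivNumerator
  nlinarith [mul_pos (mul_pos pi_pos h) (sub_pos.2 sinh_pi_div_two_lt)]

lemma betaDerivNumerator_pos {I : ℝ} (h : I * (I - 1) < 0) : 0 < betaDerivNumerator I := by
  have hab : π * (I - 1) / 2 * (π * I / 2) = π ^ 2 / 4 * (I * (I - 1)) := by ring
  have hprod := sinh_mul_sinh_lt_mul (a := π * (I - 1) / 2) (b := π * I / 2)
    (by rw [hab]; exact mul_neg_of_pos_of_neg (by positivity) h)
  rw [hab] at hprod
  unfold betaDerivNumerator
  nlinarith [mul_pos (mul_pos pi_pos (neg_pos.2 h)) (sub_pos.2 sinh_pi_div_two_lt)]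

lemma sinh_pi_mul_div_two_ne_zero {x : ℝ} (hx : x ≠ 0) : sinh (π * x / 2) ≠ 0 := by
  simpa [sinh_eq_zero, pi_ne_zero] using hx

lemma hasDerivAt_betaFn {I : ℝ} (h0 : I ≠ 0) (h1 : I ≠ 1) :
    HasDerivAt betaFn (I ^ 2 / ((I - 1) ^ 4 * sinh (π * I / 2) ^ 2) * betaDerivNumerator I) I := by
  have hsub : I - 1 ≠ 0 := sub_ne_zero.2 h1
  have hsinh : sinh (π * I / 2) ≠ 0 := sinh_pi_mul_div_two_ne_zero h0
  have hnum : HasDerivAt (fun x => x ^ 3 * sinh (π * (x - 1) / 2))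
      (3 * I ^ 2 * sinh (π * (I - 1) / 2) + I ^ 3 * (cosh (π * (I - 1) / 2) * (π / 2))) I := by
    have := ((hasDerivAt_id I).sub_const 1 |>.const_mul π |>.div_const 2).sinh
    simpa using (hasDerivAt_pow 3 I).fun_mul this
  have hden : HasDerivAt (fun x => (x - 1) ^ 3 * sinh (π * x / 2))
      (3 * (I - 1) ^ 2 * sinh (π * I / 2) + (I - 1) ^ 3 * (cosh (π * I / 2) * (π / 2))) I := by
    have := ((hasDerivAt_id I).const_mul π |>.div_const 2).sinh
    simpa using (((hasDerivAt_id I).sub_const 1).fun_pow 3).fun_mul this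
  refine (hnum.div hden (mul_ne_zero (pow_ne_zero 3 hsub) hsinh)).congr_deriv ?_
  have hsinh_sub : sinh (π / 2) = sinh (π * I / 2) * cosh (π * (I - 1) / 2)
      - cosh (π * I / 2) * sinh (π * (I - 1) / 2) := by
    rw [← sinh_sub]; ring_nf
  unfold betaDerivNumerator
  rw [hsinh_sub]
  field_simp
  ring

lemma ne_zero_and_ne_one_of_mul_sub_one_ne_zero {I : ℝ} (h : I * (I - 1) ≠ 0) :
    I ≠ 0 ∧ I ≠ 1 := by
  constructor <;> rintro rfl <;> simp at h

lemma continuousOn_betaFn {D : Set ℝ} (h : ∀ I ∈ D, I ≠ 0 ∧ I ≠ 1) : ContinuousOn betaFn D :=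
  fun I hI => (hasDerivAt_betaFn (h I hI).1 (h I hI).2).continuousAt.continuousWithinAt

lemma betaFn_deriv_factor_pos {I : ℝ} (h0 : I ≠ 0) (h1 : I ≠ 1) :
    0 < I ^ 2 / ((I - 1) ^ 4 * sinh (π * I / 2) ^ 2) := by
  have hsub : I - 1 ≠ 0 := sub_ne_zero.2 h1
  have hsinh := sinh_pi_mul_div_two_ne_zero h0
  positivity

lemma strictAntiOn_betaFn {D : Set ℝ} (hD : Convex ℝ D) (hDo : IsOpen D)
    (h : ∀ I ∈ D, 0 < I * (I - 1)) : StrictAntiOn betaFn D := by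
  have hI I (hI : I ∈ D) := ne_zero_and_ne_one_of_mul_sub_one_ne_zero (h I hI).ne'
  refine strictAntiOn_of_deriv_neg hD (continuousOn_betaFn hI) fun I hID => ?_
  rw [hDo.interior_eq] at hID
  obtain ⟨h0, h1⟩ := hI I hID
  rw [(hasDerivAt_betaFn h0 h1).deriv]
  exact mul_neg_of_pos_of_neg (betaFn_deriv_factor_pos h0 h1) (betaDerivNumerator_neg (h I hID))

lemma strictMonoOn_betaFn {D : Set ℝ} (hD : Convex ℝ D) (hDo : IsOpen D)
    (h : ∀ I ∈ D, I * (I - 1) < 0) : StrictMonoOn betaFn D := by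
  have hI I (hI : I ∈ D) := ne_zero_and_ne_one_of_mul_sub_one_ne_zero (h I hI).ne
  refine strictMonoOn_of_deriv_pos hD (continuousOn_betaFn hI) fun I hID => ?_
  rw [hDo.interior_eq] at hID
  obtain ⟨h0, h1⟩ := hI I hID
  rw [(hasDerivAt_betaFn h0 h1).deriv]
  exact mul_pos (betaFn_deriv_factor_pos h0 h1) (betaDerivNumerator_pos (h I hID))

lemma strictAntiOn_betaFn_Iio : StrictAntiOn betaFn (Iio 0) :=
  strictAntiOn_betaFn (convex_Iio 0) isOpen_Iio fun I (hI : I < 0) => by nlinarith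

lemma strictMonoOn_betaFn_Ioo : StrictMonoOn betaFn (Ioo 0 1) :=
  strictMonoOn_betaFn (convex_Ioo 0 1) isOpen_Ioo fun I hI => by nlinarith [hI.1, hI.2]

lemma strictAntiOn_betaFn_Ioi : StrictAntiOn betaFn (Ioi 1) :=
  strictAntiOn_betaFn (convex_Ioi 1) isOpen_Ioi fun I (hI : 1 < I) => by nlinarith

noncomputable def sinhHalfPiDivCube (x : ℝ) : ℝ := sinh (π * x / 2) / x ^ 3

lemma betaFn_eq_div (I : ℝ) :
    betaFn I = sinhHalfPiDivCube (I - 1) / sinhHalfPiDivCube I := by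
  rw [betaFn, sinhHalfPiDivCube, sinhHalfPiDivCube, div_div_div_eq, mul_comm (I ^ 3)]

lemma sinhHalfPiDivCube_neg (x : ℝ) : sinhHalfPiDivCube (-x) = sinhHalfPiDivCube x := by
  rw [sinhHalfPiDivCube, sinhHalfPiDivCube, mul_neg, neg_div, sinh_neg, Odd.neg_pow (by decide),
    neg_div_neg_eq]

lemma betaFn_one_sub (I : ℝ) : betaFn (1 - I) = (betaFn I)⁻¹ := by
  rw [betaFn_eq_div, betaFn_eq_div, inv_div, sub_sub_cancel_left, sinhHalfPiDivCube_neg,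
    ← sinhHalfPiDivCube_neg (1 - I), neg_sub]

lemma pi_div_two_div_sq_lt_sinhHalfPiDivCube {x : ℝ} (hx : x ≠ 0) :
    π / 2 / x ^ 2 < sinhHalfPiDivCube x := by
  wlog hpos : 0 < x generalizing x
  · simpa [sinhHalfPiDivCube_neg] using this (neg_ne_zero.2 hx) (by grind)
  have hlt : π * x / 2 < sinh (π * x / 2) := self_lt_sinh_iff.2 (by positivity)
  calc π / 2 / x ^ 2 = (π * x / 2) / x ^ 3 := by field_simp
    _ < sinhHalfPiDivCube x := div_lt_div_of_pos_right hlt (by positivity)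

lemma sinhHalfPiDivCube_pos {x : ℝ} (hx : x ≠ 0) : 0 < sinhHalfPiDivCube x :=
  lt_trans (by positivity) (pi_div_two_div_sq_lt_sinhHalfPiDivCube hx)

lemma tendsto_sinhHalfPiDivCube_nhdsNE_zero : Tendsto sinhHalfPiDivCube (𝓝[≠] 0) atTop := by
  have hsq : Tendsto (fun x : ℝ => π / 2 / x ^ 2) (𝓝[≠] 0) atTop := by
    have := (tendsto_pow_atTop two_ne_zero).comp (tendsto_norm_inv_nhdsNE_zero_atTop (α := ℝ))
    refine (this.const_mul_atTop (by positivity : 0 < π / 2)).congr fun x => ?_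
    simp [div_eq_mul_inv, inv_pow]
  exact tendsto_atTop_mono' _
    (eventually_nhdsWithin_of_forall fun x hx => (pi_div_two_div_sq_lt_sinhHalfPiDivCube hx).le) hsq

lemma continuousAt_sinhHalfPiDivCube {x : ℝ} (hx : x ≠ 0) :
    ContinuousAt sinhHalfPiDivCube x := by
  unfold sinhHalfPiDivCube
  fun_prop (disch := positivity)

lemma tendsto_betaFn_nhdsNE_zero : Tendsto betaFn (𝓝[≠] 0) (𝓝 0) := by
  have hnum : Tendsto (fun I => sinhHalfPiDivCube (I - 1)) (𝓝[≠] 0)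
      (𝓝 (sinhHalfPiDivCube (0 - 1))) :=
    ((continuousAt_sinhHalfPiDivCube (by norm_num)).comp_of_eq
      (continuousAt_id.sub continuousAt_const) rfl).tendsto.mono_left nhdsWithin_le_nhds
  rw [funext betaFn_eq_div]
  exact hnum.div_atTop tendsto_sinhHalfPiDivCube_nhdsNE_zero

lemma tendsto_betaFn_nhdsNE_one : Tendsto betaFn (𝓝[≠] 1) atTop := by
  have hnum : Tendsto (fun I => sinhHalfPiDivCube (I - 1)) (𝓝[≠] 1) atTop :=
    tendsto_sinhHalfPiDivCube_nhdsNE_zero.comp (sub_self (1 : ℝ) ▸ map_subRight_nhdsNE.le)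
  have hpos := sinhHalfPiDivCube_pos one_ne_zero
  have hden : Tendsto (fun I => (sinhHalfPiDivCube I)⁻¹) (𝓝[≠] 1) (𝓝 (sinhHalfPiDivCube 1)⁻¹) :=
    ((continuousAt_sinhHalfPiDivCube one_ne_zero).tendsto.inv₀ hpos.ne').mono_left
      nhdsWithin_le_nhds
  rw [funext betaFn_eq_div]
  exact hnum.atTop_mul_pos (inv_pos.2 hpos) hden

lemma tendsto_betaFn_atTop : Tendsto betaFn atTop (𝓝 (exp (-(π / 2)))) := by
  have hsinh := (tendsto_sinh_sub_div_sinh_atTop (π / 2)).comp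
    (tendsto_id.const_mul_atTop (by positivity : 0 < π / 2))
  have h := (tendsto_div_sub_one_atTop.pow 3).mul hsinh
  rw [one_pow, one_mul] at h
  refine h.congr fun I => ?_
  simp only [Function.comp, betaFn, id]
  rw [div_pow, div_mul_div_comm]
  ring_nf

lemma tendsto_betaFn_atBot : Tendsto betaFn atBot (𝓝 (exp (π / 2))) := by
  have h := (tendsto_betaFn_atTop.inv₀ (exp_ne_zero _)).comp
    (tendsto_atTop_add_const_left _ 1 tendsto_neg_atBot_atTop)
  rw [exp_neg, inv_inv] at h
  refine h.congr fun I => ?_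
  simp [Function.comp, ← sub_eq_add_neg, betaFn_one_sub]

lemma surjOn_betaFn_Iio : SurjOn betaFn (Iio 0) (Ioo 0 (exp (π / 2))) :=
  isPreconnected_Iio.intermediate_value_Ioo (l₁ := 𝓝[<] 0) inf_le_right
    (le_principal_iff.2 (Iio_mem_atBot 0))
    (continuousOn_betaFn fun _ (hI : _ < _) => ⟨hI.ne, by linarith⟩)
    (tendsto_betaFn_nhdsNE_zero.mono_left (nhdsWithin_mono _ fun _ hI => ne_of_lt hI))
    tendsto_betaFn_atBot

lemma surjOn_betaFn_Ioo : SurjOn betaFn (Ioo 0 1) (Ioi 0) :=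
  isPreconnected_Ioo.intermediate_value_Ioi (l₁ := 𝓝[>] 0) (l₂ := 𝓝[<] 1)
    (le_principal_iff.2 (Ioo_mem_nhdsGT one_pos)) (le_principal_iff.2 (Ioo_mem_nhdsLT one_pos))
    (continuousOn_betaFn fun _ hI => ⟨hI.1.ne', hI.2.ne⟩)
    (tendsto_betaFn_nhdsNE_zero.mono_left (nhdsWithin_mono _ fun _ hI => ne_of_gt hI))
    (tendsto_betaFn_nhdsNE_one.mono_left (nhdsWithin_mono _ fun _ hI => ne_of_lt hI))

lemma surjOn_betaFn_Ioi : SurjOn betaFn (Ioi 1) (Ioi (exp (-(π / 2)))) :=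
  isPreconnected_Ioi.intermediate_value_Ioi (l₁ := atTop) (l₂ := 𝓝[>] 1)
    (le_principal_iff.2 (Ioi_mem_atTop 1)) inf_le_right
    (continuousOn_betaFn fun _ (hI : 1 < _) => ⟨by linarith, hI.ne'⟩)
    tendsto_betaFn_atTop
    (tendsto_betaFn_nhdsNE_one.mono_left (nhdsWithin_mono _ fun _ hI => ne_of_gt hI))

theorem betaFn_three_solutions_general (μ : ℝ)
    (h₁ : Real.exp (-(π / 2)) < 1 / |μ|) (h₂ : 1 / |μ| < Real.exp (π / 2)) :
    ∃ Im I0 Ip : ℝ, Im < 0 ∧ I0 ∈ Set.Ioo (0 : ℝ) 1 ∧ 1 < Ip ∧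
      betaFn Im = 1 / |μ| ∧ betaFn I0 = 1 / |μ| ∧ betaFn Ip = 1 / |μ| ∧
      (∀ I : ℝ, betaFn I = 1 / |μ| → I = Im ∨ I = I0 ∨ I = Ip) ∧
      (∀ I ∈ Set.Ioo Im I0, betaFn I < 1 / |μ|) ∧
      (∀ I : ℝ, Ip < I → betaFn I < 1 / |μ|) ∧
      (∀ I : ℝ, I < Im → 1 / |μ| < betaFn I) ∧
      (∀ I ∈ Set.Ioo I0 1, 1 / |μ| < betaFn I) ∧
      (∀ I ∈ Set.Ioo 1 Ip, 1 / |μ| < betaFn I) := by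
  set c := 1 / |μ|
  have hc : 0 < c := (exp_pos _).trans h₁
  obtain ⟨Im, hIm : Im < 0, hβm⟩ := surjOn_betaFn_Iio ⟨hc, h₂⟩
  obtain ⟨I0, hI0, hβ0⟩ := surjOn_betaFn_Ioo hc
  obtain ⟨Ip, hIp : 1 < Ip, hβp⟩ := surjOn_betaFn_Ioi h₁
  have hβ_zero : betaFn 0 = 0 := by simp [betaFn]
  have hβ_one : betaFn 1 = 0 := by simp [betaFn]
  refine ⟨Im, I0, Ip, hIm, hI0, hIp, hβm, hβ0, hβp, fun I hI => ?_, fun I hI => ?_,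
    fun I hI => hβp ▸ strictAntiOn_betaFn_Ioi hIp (hIp.trans hI) hI,
    fun I hI => hβm ▸ strictAntiOn_betaFn_Iio (hI.trans hIm) hIm hI,
    fun I hI => hβ0 ▸ strictMonoOn_betaFn_Ioo hI0 ⟨hI0.1.trans hI.1, hI.2⟩ hI.1,
    fun I hI => hβp ▸ strictAntiOn_betaFn_Ioi hI.1 hIp hI.2⟩
  · rcases lt_trichotomy I 0 with hneg | rfl | hpos
    · exact .inl (strictAntiOn_betaFn_Iio.injOn hneg hIm (hI.trans hβm.symm))
    · exact absurd (hβ_zero ▸ hI) hc.ne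
    rcases lt_trichotomy I 1 with hlt | rfl | hgt
    · exact .inr (.inl (strictMonoOn_betaFn_Ioo.injOn ⟨hpos, hlt⟩ hI0 (hI.trans hβ0.symm)))
    · exact absurd (hβ_one ▸ hI) hc.ne
    · exact .inr (.inr (strictAntiOn_betaFn_Ioi.injOn hgt hIp (hI.trans hβp.symm)))
  · rcases lt_trichotomy I 0 with hneg | rfl | hpos
    · exact hβm ▸ strictAntiOn_betaFn_Iio hIm hneg hI.1
    · exact hβ_zero.trans_lt hc
    · exact hβ0 ▸ strictMonoOn_betaFn_Ioo ⟨hpos, hI.2.trans hI0.2⟩ hI0 hI.2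

/-- For `e^{-π/2} < 1/|μ| < e^{π/2}`, the equation `β(I) = 1/|μ|` has exactly three
solutions `I₋ < 0`, `I₀ ∈ (0,1)`, `I₊ > 1`, with `β < 1/|μ|` on `(I₋, I₀) ∪ (I₊, ∞)`
and `β > 1/|μ|` on `(-∞, I₋) ∪ (I₀, 1) ∪ (1, I₊)`. -/
theorem betaFn_three_solutions (μ : ℝ) (hμ : μ ≠ 0)
    (h₁ : Real.exp (-(π / 2)) < 1 / |μ|) (h₂ : 1 / |μ| < Real.exp (π / 2)) :
    ∃ Im I0 Ip : ℝ, Im < 0 ∧ I0 ∈ Set.Ioo (0 : ℝ) 1 ∧ 1 < Ip ∧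
      betaFn Im = 1 / |μ| ∧ betaFn I0 = 1 / |μ| ∧ betaFn Ip = 1 / |μ| ∧
      (∀ I : ℝ, betaFn I = 1 / |μ| → I = Im ∨ I = I0 ∨ I = Ip) ∧
      (∀ I ∈ Set.Ioo Im I0, betaFn I < 1 / |μ|) ∧
      (∀ I : ℝ, Ip < I → betaFn I < 1 / |μ|) ∧
      (∀ I : ℝ, I < Im → 1 / |μ| < betaFn I) ∧
      (∀ I ∈ Set.Ioo I0 1, 1 / |μ| < betaFn I) ∧
      (∀ I ∈ Set.Ioo 1 Ip, 1 / |μ| < betaFn I) :=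
  betaFn_three_solutions_general μ h₁ h₂
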